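/- Let H be a finite group, K and J subgroups of H, and U a subgroup of J. Let D ⊆ H be a set containing exactly one representative of each double coset JhK in J\H/K. Then the number of cosets hK ∈ H/K with h⁻¹Uh ≤ K equals Σ_{h ∈ D} (the number of cosets jL_h ∈ J/L_h with j⁻¹Uj ≤ L_h), where L_h = J ∩ hKh⁻¹. Equivalently, the number of fixed points of the left-multiplication action of U on H/K equals the sum over (J,K)-double cosets JhK of the number of fixed points of U acting on J/(J ∩ hKh⁻¹). -/

import Mathlib

open scoped Classical

/-- The conjugate subgroup `h K h⁻¹`. -/
def conjSub {H : Type*} [Group H] (h : H) (K : Subgroup H) : Subgroup H :=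
  Subgroup.map (MulAut.conj h).toMonoidHom K

lemma mem_conjSub {H : Type*} [Group H] {d y : H} {K : Subgroup H} :
    y ∈ conjSub d K ↔ d⁻¹ * y * d ∈ K := by
  rw [conjSub, Subgroup.mem_map_equiv]
  simp [MulAut.conj]

theorem stmt17 {H : Type*} [Group H] [Fintype H] (K J U : Subgroup H) (hUJ : U ≤ J)
    (D : Finset H)
    (hD : ∀ h : H, ∃! d, d ∈ D ∧
      DoubleCoset.doubleCoset d (J : Set H) (K : Set H) = DoubleCoset.doubleCoset h (J : Set H) (K : Set H)) :
    Nat.card {x : H ⧸ K // ∀ u ∈ U, u • x = x} =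
      ∑ h ∈ D, Nat.card {x : J ⧸ (J ⊓ conjSub h K).subgroupOf J //
        ∀ u ∈ U.subgroupOf J, u • x = x} := by
  classical
  set L : H → Subgroup J := fun d => (J ⊓ conjSub d K).subgroupOf J with hL
  have memL : ∀ (d : H) (j : J), j ∈ L d ↔ d⁻¹ * (j : H) * d ∈ K := by
    intro d j
    rw [hL, Subgroup.mem_subgroupOf, Subgroup.mem_inf, mem_conjSub]
    exact ⟨fun h => h.2, fun h => ⟨j.2, h⟩⟩
  -- the underlying map J ⧸ L d → H ⧸ K
  have fwd : ∀ d : H, ∀ j₁ j₂ : J, (QuotientGroup.mk j₁ : J ⧸ L d) = QuotientGroup.mk j₂ ↔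
      (QuotientGroup.mk ((j₁ : H) * d) : H ⧸ K) = QuotientGroup.mk ((j₂ : H) * d) := by
    intro d j₁ j₂
    rw [QuotientGroup.eq, QuotientGroup.eq, memL]
    constructor
    · intro h; convert h using 1; push_cast; group
    · intro h; convert h using 1; push_cast; group
  set f : ∀ d : H, J ⧸ L d → H ⧸ K := fun d =>
    Quotient.map' (fun j => (j : H) * d)
      (by
        intro j₁ j₂ h
        have h1 : (QuotientGroup.mk j₁ : J ⧸ L d) = QuotientGroup.mk j₂ := Quotient.sound' h
        exact QuotientGroup.leftRel_apply.mpr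
          (QuotientGroup.eq.mp ((fwd d j₁ j₂).mp h1))) with hf
  have f_mk : ∀ (d : H) (j : J), f d (QuotientGroup.mk j) = QuotientGroup.mk ((j : H) * d) :=
    fun d j => rfl
  -- smul lemmas
  have smulH : ∀ (u h : H), u • (QuotientGroup.mk h : H ⧸ K) = QuotientGroup.mk (u * h) :=
    fun u h => rfl
  have smulJ : ∀ (d : H) (u j : J),
      u • (QuotientGroup.mk j : J ⧸ L d) = QuotientGroup.mk (u * j) := fun d u j => rfl
  set F : (Σ d : D, {x : J ⧸ L d // ∀ u ∈ U.subgroupOf J, u • x = x}) →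
      {x : H ⧸ K // ∀ u ∈ U, u • x = x} := fun p =>
    ⟨f p.1 p.2.1, by
      obtain ⟨⟨d, hd⟩, ⟨x, hx⟩⟩ := p
      induction x using Quotient.inductionOn' with
      | h j =>
        intro u hu
        have huJ : u ∈ J := hUJ hu
        have hfix := hx ⟨u, huJ⟩ (by simpa [Subgroup.mem_subgroupOf] using hu)
        rw [show (Quotient.mk'' j : J ⧸ L d) = QuotientGroup.mk j from rfl, smulJ] at hfix
        have hKey := (fwd d (⟨u, huJ⟩ * j) j).mp hfix
        show u • (QuotientGroup.mk ((j : H) * d) : H ⧸ K) = QuotientGroup.mk ((j : H) * d)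
        rw [smulH, ← hKey]
        congr 1
        push_cast
        group⟩ with hF
  have hFbij : Function.Bijective F := by
    constructor
    · rintro ⟨⟨d₁, hd₁⟩, x₁, hx₁⟩ ⟨⟨d₂, hd₂⟩, x₂, hx₂⟩ h
      induction x₁ using Quotient.inductionOn' with
      | h j₁ =>
      induction x₂ using Quotient.inductionOn' with
      | h j₂ =>
        have hval : f d₁ (QuotientGroup.mk j₁) = f d₂ (QuotientGroup.mk j₂) :=
          congrArg Subtype.val h
        rw [f_mk, f_mk, QuotientGroup.eq] at hval
        -- d₂ ∈ doset d₁
        have hd2mem : d₂ ∈ DoubleCoset.doubleCoset d₁ (J : Set H) (K : Set H) := by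
          rw [DoubleCoset.mem_doubleCoset]
          refine ⟨(j₂⁻¹ * j₁ : J), (j₂⁻¹ * j₁ : J).2,
            ((j₁ : H) * d₁)⁻¹ * ((j₂ : H) * d₂), hval, ?_⟩
          push_cast
          group
        have hdsq : DoubleCoset.doubleCoset d₂ (J : Set H) (K : Set H)
            = DoubleCoset.doubleCoset d₁ (J : Set H) (K : Set H) :=
          DoubleCoset.doubleCoset_eq_of_mem hd2mem
        obtain ⟨c, -, hcu⟩ := hD d₁
        have hdd : d₂ = d₁ := by
          rw [hcu d₂ ⟨hd₂, hdsq⟩, hcu d₁ ⟨hd₁, rfl⟩]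
        subst hdd
        have hq : (QuotientGroup.mk j₁ : J ⧸ L d₂) = QuotientGroup.mk j₂ :=
          (fwd d₂ j₁ j₂).mpr (QuotientGroup.eq.mpr hval)
        apply Sigma.ext
        · rfl
        · exact heq_of_eq (Subtype.ext hq)
    · rintro ⟨x, hx⟩
      induction x using Quotient.inductionOn' with
      | h h =>
        obtain ⟨d, ⟨hdD, hds⟩, -⟩ := hD h
        have hmem : h ∈ DoubleCoset.doubleCoset d (J : Set H) (K : Set H) :=
          hds ▸ DoubleCoset.mem_doubleCoset_self J K h
        rw [DoubleCoset.mem_doubleCoset] at hmem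
        obtain ⟨j, hj, k, hk, hh⟩ := hmem
        have hx' : ∀ u ∈ U, u • (QuotientGroup.mk h : H ⧸ K) = QuotientGroup.mk h := hx
        have hcoset : (QuotientGroup.mk (((⟨j, hj⟩ : J) : H) * d) : H ⧸ K)
            = QuotientGroup.mk h := by
          rw [QuotientGroup.eq, hh]
          show (j * d)⁻¹ * (j * d * k) ∈ K
          rw [show (j * d)⁻¹ * (j * d * k) = k by group]
          exact hk
        have h3 : ((j : H) * d)⁻¹ * h ∈ K := QuotientGroup.eq.mp hcoset
        have h4 : h⁻¹ * ((j : H) * d) ∈ K := by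
          have := K.inv_mem h3; convert this using 1; group
        refine ⟨⟨⟨d, hdD⟩, QuotientGroup.mk (⟨j, hj⟩ : J), ?_⟩, ?_⟩
        · intro u hu
          rw [Subgroup.mem_subgroupOf] at hu
          rw [show (QuotientGroup.mk (⟨j, hj⟩ : J) : J ⧸ L d)
            = QuotientGroup.mk (⟨j, hj⟩ : J) from rfl, smulJ]
          apply (fwd d _ _).mpr
          rw [QuotientGroup.eq]
          have hfixH := hx' (u : H) hu
          rw [smulH, QuotientGroup.eq] at hfixH
          -- hfixH : ((u:H) * h)⁻¹ * h ∈ K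
          have h2 : h⁻¹ * (u : H) * h ∈ K := by
            have := K.inv_mem hfixH; convert this using 1; group
          have h1 : ((j : H) * d)⁻¹ * ((u : H) * ((j : H) * d)) ∈ K := by
            have := K.mul_mem (K.mul_mem h3 h2) h4
            convert this using 1; group
          have := K.inv_mem h1
          convert this using 1
          push_cast
          group
        · apply Subtype.ext
          show f d (QuotientGroup.mk (⟨j, hj⟩ : J)) = Quotient.mk'' h
          rw [f_mk]
          exact hcoset
  have hcard := Nat.card_congr (Equiv.ofBijective F hFbij)
  rw [← hcard]
  rw [show Nat.card (Σ d : D, {x : J ⧸ L d // ∀ u ∈ U.subgroupOf J, u • x = x})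
      = ∑ d : D, Nat.card {x : J ⧸ L d // ∀ u ∈ U.subgroupOf J, u • x = x} by
    rw [Nat.card_eq_fintype_card, Fintype.card_sigma]
    exact Finset.sum_congr rfl fun d _ => Nat.card_eq_fintype_card.symm]
  rw [← Finset.sum_attach D
    (fun h => Nat.card {x : J ⧸ L h // ∀ u ∈ U.subgroupOf J, u • x = x})]
  rfl
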